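/- arXiv:1104.5338 — 2 statements merged into one kernel-verified Lean document; each statement's English description precedes it below -/
import Mathlib

section
/- (Upper bound for α⁺.) For every n ≥ 2, 0 < λ ≤ Λ, μ ≥ 0 and σ₀ ∈ (0,1] there exists a constant C > 0, depending only on n, λ, Λ, μ and σ₀, with the following property: if ξ ∈ S^{n−1} and σ ≤ 1 − σ₀ are such that ω ⊇ { x ∈ S^{n−1} : x·ξ > σ }, then for every operator F satisfying the structural conditions with these λ, Λ, μ one has α⁺(F,ω) ≤ C. -/
open Set Filter Topology Metric

noncomputable section

/-- Euclidean space `ℝⁿ`. -/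
abbrev En (n : ℕ) := EuclideanSpace ℝ (Fin n)

/-- Real symmetric-matrix space `Sₙ` is modelled inside all `n × n` matrices. -/
abbrev Mat (n : ℕ) := Matrix (Fin n) (Fin n) ℝ

/-- The type of fully nonlinear operators `F = F(M, p, x)`. -/
abbrev OpType (n : ℕ) := Mat n → En n → En n → ℝ

/-- The gradient vector `Dφ(x)` of a function `φ`. -/
def grad (n : ℕ) (φ : En n → ℝ) (x : En n) : En n :=
  WithLp.toLp 2 (fun i => fderiv ℝ φ x (EuclideanSpace.single i 1))

/-- The Hessian matrix `D²φ(x)` of a function `φ`. -/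
def hess (n : ℕ) (φ : En n → ℝ) (x : En n) : Mat n :=
  Matrix.of fun i j =>
    fderiv ℝ (fun y => fderiv ℝ φ y (EuclideanSpace.single j 1)) x (EuclideanSpace.single i 1)

/-- `u` is a viscosity subsolution of `G(D²u, Du, u, x) ≤ 0` in the open set `U`. -/
def ViscSubsol (n : ℕ) (G : Mat n → En n → ℝ → En n → ℝ) (U : Set (En n)) (u : En n → ℝ) :
    Prop :=
  ∀ φ : En n → ℝ, ContDiff ℝ 2 φ → ∀ x₀ ∈ U,
    IsLocalMaxOn (fun x => u x - φ x) U x₀ → G (hess n φ x₀) (grad n φ x₀) (u x₀) x₀ ≤ 0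

/-- `u` is a viscosity supersolution of `G(D²u, Du, u, x) ≥ 0` in the open set `U`. -/
def ViscSupersol (n : ℕ) (G : Mat n → En n → ℝ → En n → ℝ) (U : Set (En n)) (u : En n → ℝ) :
    Prop :=
  ∀ φ : En n → ℝ, ContDiff ℝ 2 φ → ∀ x₀ ∈ U,
    IsLocalMinOn (fun x => u x - φ x) U x₀ → 0 ≤ G (hess n φ x₀) (grad n φ x₀) (u x₀) x₀

/-- `u` is a (continuous) viscosity solution of `G(D²u, Du, u, x) = 0` in `U`. -/
def ViscSol (n : ℕ) (G : Mat n → En n → ℝ → En n → ℝ) (U : Set (En n)) (u : En n → ℝ) :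
    Prop :=
  ContinuousOn u U ∧ ViscSubsol n G U u ∧ ViscSupersol n G U u

/-- The set of symmetric matrices `A` with `λ I ≤ A ≤ Λ I` in the Loewner order. -/
def PucciSet (n : ℕ) (lam Lam : ℝ) : Set (Mat n) :=
  {A | (A - lam • (1 : Mat n)).PosSemidef ∧ (Lam • (1 : Mat n) - A).PosSemidef}

/-- The Pucci maximal operator `P⁺`. -/
def PucciPlus (n : ℕ) (lam Lam : ℝ) (M : Mat n) : ℝ :=
  sSup ((fun A => -Matrix.trace (A * M)) '' PucciSet n lam Lam)

/-- The Pucci minimal operator `P⁻`. -/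
def PucciMinus (n : ℕ) (lam Lam : ℝ) (M : Mat n) : ℝ :=
  sInf ((fun A => -Matrix.trace (A * M)) '' PucciSet n lam Lam)

/-- A (Frobenius) norm on matrices. -/
def matNorm (n : ℕ) (M : Mat n) : ℝ := Real.sqrt (∑ i, ∑ j, (M i j) ^ 2)

/-- The open cone `C_ω` over a subset `ω` of the unit sphere. -/
def cone (n : ℕ) (ω : Set (En n)) : Set (En n) := {x | x ≠ 0 ∧ ‖x‖⁻¹ • x ∈ ω}

/-- The annular section `E(ω, r, R) = C_ω ∩ {r < |x| < R}`. -/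
def Econe (n : ℕ) (ω : Set (En n)) (r R : ℝ) : Set (En n) :=
  cone n ω ∩ {x | r < ‖x‖ ∧ ‖x‖ < R}

/-- `H_α(ω)`: continuous functions on `C_ω` with `u(x) = t^α u(t x)` for all `t > 0`. -/
def Hhom (n : ℕ) (ω : Set (En n)) (α : ℝ) (u : En n → ℝ) : Prop :=
  ContinuousOn u (cone n ω) ∧ ∀ x ∈ cone n ω, ∀ t : ℝ, 0 < t → u x = t ^ α * u (t • x)

/-- `S` is a `C²` hypersurface: locally a regular zero set of a `C²` function. -/
def IsC2Hypersurface (n : ℕ) (S : Set (En n)) : Prop :=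
  ∀ x ∈ S, ∃ (V : Set (En n)) (f : En n → ℝ), IsOpen V ∧ x ∈ V ∧ ContDiffOn ℝ 2 f V ∧
    (∀ y ∈ V, fderiv ℝ f y ≠ 0) ∧ S ∩ V = {y ∈ V | f y = 0}

/-- `ω` is a proper, `C²`-smooth, open connected subdomain of the unit sphere. -/
structure GoodCone (n : ℕ) (ω : Set (En n)) : Prop where
  subset_sphere : ω ⊆ sphere (0 : En n) 1
  nonempty : ω.Nonempty
  ne_sphere : ω ≠ sphere (0 : En n) 1
  rel_open : ∃ V : Set (En n), IsOpen V ∧ ω = V ∩ sphere (0 : En n) 1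
  connected : IsConnected ω
  c2_boundary : IsC2Hypersurface n (frontier (cone n ω) \ {0})

/-- The structural conditions (ellipticity, homogeneity, Hölder regularity in `x`,
scaling invariance) on the operator `F`. -/
structure StructF (n : ℕ) (lam Lam mu K θ : ℝ) (F : OpType n) : Prop where
  lam_pos : 0 < lam
  lam_le : lam ≤ Lam
  mu_nonneg : 0 ≤ mu
  K_pos : 0 < K
  theta_mem : θ ∈ Ioc (1 / 2 : ℝ) 1
  cont : ContinuousOn (fun q : Mat n × En n × En n => F q.1 q.2.1 q.2.2) {q | q.2.2 ≠ 0}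
  ellip_lower : ∀ (M N : Mat n) (p q x : En n), x ≠ 0 →
    PucciMinus n lam Lam (M - N) - mu * ‖x‖⁻¹ * ‖p - q‖ ≤ F M p x - F N q x
  ellip_upper : ∀ (M N : Mat n) (p q x : En n), x ≠ 0 →
    F M p x - F N q x ≤ PucciPlus n lam Lam (M - N) + mu * ‖x‖⁻¹ * ‖p - q‖
  homog : ∀ t : ℝ, 0 ≤ t → ∀ (M : Mat n) (p x : En n), x ≠ 0 → F (t • M) (t • p) x = t * F M p x
  holder : ∀ (M : Mat n) (x y : En n), ‖x‖ = 1 → ‖y‖ = 1 →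
    |F M 0 x - F M 0 y| ≤ K * (1 + matNorm n M) * ‖x - y‖ ^ θ
  scaling : ∀ r : ℝ, 0 < r → ∀ (M : Mat n) (p x : En n), x ≠ 0 →
    F ((r ^ 2) • M) (r • p) x = r ^ 2 * F M p (r • x)

/-- The admissible set defining `α⁺(F, ω)`. -/
def alphaPlusSet (n : ℕ) (F : OpType n) (ω : Set (En n)) : Set ℝ :=
  {α | 0 < α ∧ ∃ u : En n → ℝ, Hhom n ω α u ∧ (∀ x ∈ cone n ω, 0 < u x) ∧
    ViscSupersol n (fun M p _ x => F M p x) (cone n ω) u}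

/-- The admissible set defining `α⁻(F, ω)`. -/
def alphaMinusSet (n : ℕ) (F : OpType n) (ω : Set (En n)) : Set ℝ :=
  {α | α < 0 ∧ ∃ u : En n → ℝ, Hhom n ω α u ∧ (∀ x ∈ cone n ω, 0 < u x) ∧
    ViscSupersol n (fun M p _ x => F M p x) (cone n ω) u}

/-- The scaling exponent `α⁺(F, ω)`. -/
def alphaPlus (n : ℕ) (F : OpType n) (ω : Set (En n)) : ℝ := sSup (alphaPlusSet n F ω)

/-- The scaling exponent `α⁻(F, ω)`. -/
def alphaMinus (n : ℕ) (F : OpType n) (ω : Set (En n)) : ℝ := sInf (alphaMinusSet n F ω)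

/-- `Ψ` is the (α⁺)-homogeneous positive singular solution `Ψ⁺` in the cone `C_ω`. -/
def IsPsiPlus (n : ℕ) (F : OpType n) (ω : Set (En n)) (Ψ : En n → ℝ) : Prop :=
  Hhom n ω (alphaPlus n F ω) Ψ ∧
  ContinuousOn Ψ (closure (cone n ω) \ {0}) ∧
  (∀ x ∈ cone n ω, 0 < Ψ x) ∧
  (∀ x ∈ frontier (cone n ω) \ {0}, Ψ x = 0) ∧
  ViscSol n (fun M p _ x => F M p x) (cone n ω) Ψ

/-- `Ψ` is the (α⁻)-homogeneous positive singular solution `Ψ⁻` in the cone `C_ω`. -/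
def IsPsiMinus (n : ℕ) (F : OpType n) (ω : Set (En n)) (Ψ : En n → ℝ) : Prop :=
  Hhom n ω (alphaMinus n F ω) Ψ ∧
  ContinuousOn Ψ (closure (cone n ω)) ∧
  (∀ x ∈ cone n ω, 0 < Ψ x) ∧
  (∀ x ∈ frontier (cone n ω) \ {0}, Ψ x = 0) ∧
  ViscSol n (fun M p _ x => F M p x) (cone n ω) Ψ

/-- `Ω` has a conical corner at `0 ∈ ∂Ω`, straightened by the `C²` diffeomorphism `ζ` of
the unit ball, with `ζ(Ω ∩ B₁) = C_ω ∩ B₁`, `ζ(0) = 0` and `Dζ(0) = I`. -/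
structure ConicalCorner (n : ℕ) (ω Ω : Set (En n)) (ζ : En n → En n) : Prop where
  zero_bdry : (0 : En n) ∈ frontier Ω
  contDiff : ContDiffOn ℝ 2 ζ (ball (0 : En n) 1)
  mapsTo : MapsTo ζ (ball (0 : En n) 1) (ball (0 : En n) 1)
  exists_inv : ∃ ξ : En n → En n, ContDiffOn ℝ 2 ξ (ball (0 : En n) 1) ∧
    MapsTo ξ (ball (0 : En n) 1) (ball (0 : En n) 1) ∧
    (∀ x ∈ ball (0 : En n) 1, ξ (ζ x) = x) ∧ ∀ y ∈ ball (0 : En n) 1, ζ (ξ y) = y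
  image_eq : ζ '' (Ω ∩ ball (0 : En n) 1) = cone n ω ∩ ball (0 : En n) 1
  map_zero : ζ 0 = 0
  deriv_zero : fderiv ℝ ζ 0 = ContinuousLinearMap.id ℝ (En n)

/-- The inversion `x ↦ x / |x|²`. -/
def sInv (n : ℕ) (x : En n) : En n := (‖x‖ ^ 2)⁻¹ • x

/-!
Let `u ∈ H_α(ω)` be a positive supersolution and `x₀` a minimum point of `u` on a small ball
around `ξ`. Since `ω` contains the cap `{x · ξ > σ}`, every ball of radius `σ₀/32` centred within
`σ₀/32` of the segment `[ξ, 2ξ]` lies in `C_ω`, and on it `|x - z| ≤ |x|`, which tames the drift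
term `μ |x|⁻¹ |p|`. On such a ball the Gaussian `exp(-κ |x - z|² / R²)`, `κ = 2(nΛ + μ + 1)/λ`, is a
strict subsolution off `B_{R/2}(z)`; comparing `u` with it on the annulus gives the Harnack step
`u ≥ θ · inf_{B_{R/2}} u` on `B_{3R/4}`, with `θ ∈ (0, 1]` depending only on `n, λ, Λ, μ`.
A chain of `N = ⌈256/σ₀⌉` such steps from `x₀` to `2x₀` gives
`2^{-α} u(x₀) = u(2x₀) ≥ θ^N u(x₀)`, i.e. `α ≤ N log(1/θ) / log 2`.
-/

section

variable {n : ℕ}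

lemma grad_smul (c : ℝ) (φ : En n → ℝ) (x : En n) : grad n (c • φ) x = c • grad n φ x := by
  ext i
  simp [grad, fderiv_const_smul_field]

lemma hess_smul (c : ℝ) (φ : En n → ℝ) (x : En n) : hess n (c • φ) x = c • hess n φ x := by
  ext i j
  simp only [hess, Matrix.of_apply, Matrix.smul_apply, smul_eq_mul, fderiv_const_smul_field]
  change fderiv ℝ (c • fun y => fderiv ℝ φ y (EuclideanSpace.single j 1)) x _ = _
  rw [fderiv_const_smul_field]
  rfl

def gaussian (z : En n) (k : ℝ) (x : En n) : ℝ := Real.exp (-k * ‖x - z‖ ^ 2)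

lemma contDiff_gaussian (z : En n) (k : ℝ) : ContDiff ℝ 2 (gaussian z k) :=
  Real.contDiff_exp.comp
    (contDiff_const.mul ((contDiff_norm_sq ℝ).comp (contDiff_id.sub contDiff_const)))

lemma hasFDerivAt_gaussian (z : En n) (k : ℝ) (x : En n) :
    HasFDerivAt (gaussian z k) ((-2 * k * gaussian z k x) • innerSL ℝ (x - z)) x := by
  have h : HasFDerivAt (fun y : En n => ‖y - z‖ ^ 2) (2 • innerSL ℝ (x - z)) x := by
    simpa using ((hasFDerivAt_id x).sub_const z).norm_sq
  refine (h.const_mul (-k)).exp.congr_fderiv ?_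
  ext v
  simp only [gaussian, smul_apply, coe_innerSL_apply, smul_eq_mul, nsmul_eq_mul]
  ring

lemma gaussian_pos (z : En n) (k : ℝ) (x : En n) : 0 < gaussian z k x := Real.exp_pos _

lemma fderiv_gaussian_single (z : En n) (k : ℝ) (y : En n) (j : Fin n) :
    fderiv ℝ (gaussian z k) y (EuclideanSpace.single j 1)
      = -2 * k * gaussian z k y * (y j - z j) := by
  simp [(hasFDerivAt_gaussian z k y).fderiv, EuclideanSpace.inner_single_right]

lemma grad_gaussian (z : En n) (k : ℝ) (x : En n) :
    grad n (gaussian z k) x = (-2 * k * gaussian z k x) • (x - z) := by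
  ext i
  simp [grad, fderiv_gaussian_single]

lemma hess_gaussian (z : En n) (k : ℝ) (x : En n) :
    hess n (gaussian z k) x = (4 * k ^ 2 * gaussian z k x) • Matrix.vecMulVec ⇑(x - z) ⇑(x - z)
      - (2 * k * gaussian z k x) • (1 : Mat n) := by
  ext i j
  have hd : HasFDerivAt (fun y => -2 * k * gaussian z k y * (y j - z j)) _ x :=
    ((hasFDerivAt_gaussian z k x).const_mul (-2 * k)).mul
      ((EuclideanSpace.proj (𝕜 := ℝ) j).hasFDerivAt.sub_const (z j))
  simp only [hess, Matrix.of_apply, fderiv_gaussian_single, hd.fderiv]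
  simp only [neg_mul, neg_smul, map_sub, smul_neg, neg_neg, add_apply, neg_apply, smul_apply,
    PiLp.proj_apply, PiLp.single_apply, smul_eq_mul, mul_ite, mul_one, mul_zero, sub_apply,
    coe_innerSL_apply, EuclideanSpace.inner_single_right, Real.ringHom_apply, one_mul,
    WithLp.ofLp_sub, Matrix.sub_apply, Matrix.smul_apply, Matrix.vecMulVec_apply, Pi.sub_apply,
    Matrix.one_apply]
  simp only [eq_comm (a := j)]
  split_ifs <;> ring

lemma dotProduct_self_eq_norm_sq (v : En n) : ⇑v ⬝ᵥ ⇑v = ‖v‖ ^ 2 := by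
  rw [← real_inner_self_eq_norm_sq, EuclideanSpace.inner_eq_star_dotProduct]
  rfl

section Pucci

open Matrix

variable {lam Lam : ℝ}

lemma smul_one_mem_pucciSet (h : lam ≤ Lam) : lam • (1 : Mat n) ∈ PucciSet n lam Lam := by
  refine ⟨by simpa using Matrix.PosSemidef.zero, ?_⟩
  rw [← sub_smul]
  exact Matrix.PosSemidef.one.smul (sub_nonneg.2 h)

lemma lam_mul_dotProduct_le {A : Mat n} (hA : A ∈ PucciSet n lam Lam) (v : Fin n → ℝ) :
    lam * (v ⬝ᵥ v) ≤ v ⬝ᵥ (A *ᵥ v) := by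
  have h := hA.1.dotProduct_mulVec_nonneg v
  rw [star_trivial, Matrix.sub_mulVec, dotProduct_sub, Matrix.smul_mulVec,
    Matrix.one_mulVec, dotProduct_smul, smul_eq_mul] at h
  linarith

lemma trace_le_of_mem_pucciSet {A : Mat n} (hA : A ∈ PucciSet n lam Lam) : A.trace ≤ n * Lam := by
  have h := hA.2.trace_nonneg
  rw [trace_sub, trace_smul, trace_one, Fintype.card_fin, smul_eq_mul] at h
  linarith

lemma pucciPlus_le_of_forall {M : Mat n} {B : ℝ} (hLam : lam ≤ Lam)
    (h : ∀ A ∈ PucciSet n lam Lam, -(A * M).trace ≤ B) : PucciPlus n lam Lam M ≤ B :=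
  csSup_le ⟨_, lam • 1, smul_one_mem_pucciSet hLam, rfl⟩ (by rintro _ ⟨A, hA, rfl⟩; exact h A hA)

lemma pucciPlus_smul_vecMulVec_sub_smul_one_le (hLam : lam ≤ Lam) {β γ : ℝ} (hβ : 0 ≤ β)
    (hγ : 0 ≤ γ) (v : Fin n → ℝ) :
    PucciPlus n lam Lam (β • vecMulVec v v - γ • 1) ≤ -(β * lam * (v ⬝ᵥ v)) + γ * (n * Lam) := by
  refine pucciPlus_le_of_forall hLam fun A hA => ?_
  have htr : (A * (β • vecMulVec v v - γ • 1)).trace = β * (v ⬝ᵥ (A *ᵥ v)) - γ * A.trace := by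
    simp [mul_sub, Matrix.mul_vecMulVec, dotProduct_comm]
  rw [htr]
  nlinarith [mul_le_mul_of_nonneg_left (lam_mul_dotProduct_le hA v) hβ,
    mul_le_mul_of_nonneg_left (trace_le_of_mem_pucciSet hA) hγ]

end Pucci

lemma gaussian_le_exp {z x : En n} {κ R t : ℝ} (hκ : 0 ≤ κ) (hR : 0 < R) (ht : 0 ≤ t)
    (h : t * R ≤ ‖x - z‖) : gaussian z (κ / R ^ 2) x ≤ Real.exp (-κ * t ^ 2) := by
  have : t ^ 2 ≤ ‖x - z‖ ^ 2 / R ^ 2 := by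
    rw [le_div_iff₀ (by positivity), ← mul_pow]
    exact pow_le_pow_left₀ (by positivity) h 2
  refine Real.exp_le_exp.2 ?_
  rw [neg_mul, neg_mul, neg_le_neg_iff, div_mul_eq_mul_div, mul_div_assoc]
  exact mul_le_mul_of_nonneg_left this hκ

lemma exp_le_gaussian {z x : En n} {κ R t : ℝ} (hκ : 0 ≤ κ) (hR : 0 < R)
    (h : ‖x - z‖ ≤ t * R) : Real.exp (-κ * t ^ 2) ≤ gaussian z (κ / R ^ 2) x := by
  have : ‖x - z‖ ^ 2 / R ^ 2 ≤ t ^ 2 := by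
    rw [div_le_iff₀ (by positivity)]
    nlinarith [norm_nonneg (x - z)]
  refine Real.exp_le_exp.2 ?_
  rw [neg_mul, neg_mul, neg_le_neg_iff, div_mul_eq_mul_div, mul_div_assoc]
  exact mul_le_mul_of_nonneg_left this hκ

/-- The Gaussian barrier normalised to be `1` on `|x - z| = R/2` and `0` on `|x - z| = R`. -/
def annulusBarrier (κ : ℝ) (z : En n) (R : ℝ) (x : En n) : ℝ :=
  (gaussian z (κ / R ^ 2) x - Real.exp (-κ)) / (Real.exp (-κ * (1 / 2) ^ 2) - Real.exp (-κ))

def harnackRatio (κ : ℝ) : ℝ :=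
  (Real.exp (-κ * (3 / 4) ^ 2) - Real.exp (-κ)) / (Real.exp (-κ * (1 / 2) ^ 2) - Real.exp (-κ))

section Barrier

variable {κ R : ℝ} {z x : En n}

lemma annulusBarrier_denom_pos (hκ : 0 < κ) : 0 < Real.exp (-κ * (1 / 2) ^ 2) - Real.exp (-κ) :=
  sub_pos.2 (Real.exp_lt_exp.2 (by nlinarith))

lemma harnackRatio_pos (hκ : 0 < κ) : 0 < harnackRatio κ :=
  div_pos (sub_pos.2 (Real.exp_lt_exp.2 (by nlinarith))) (annulusBarrier_denom_pos hκ)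

lemma harnackRatio_le_one (hκ : 0 < κ) : harnackRatio κ ≤ 1 :=
  div_le_one_of_le₀ (sub_le_sub_right (Real.exp_le_exp.2 (by nlinarith)) _)
    (annulusBarrier_denom_pos hκ).le

lemma annulusBarrier_nonpos (hκ : 0 < κ) (hR : 0 < R) (hx : R ≤ ‖x - z‖) :
    annulusBarrier κ z R x ≤ 0 := by
  have := gaussian_le_exp hκ.le hR zero_le_one (by rwa [one_mul])
  rw [one_pow, mul_one] at this
  exact div_nonpos_of_nonpos_of_nonneg (by linarith) (annulusBarrier_denom_pos hκ).le

lemma annulusBarrier_le_one (hκ : 0 < κ) (hR : 0 < R) (hx : R / 2 ≤ ‖x - z‖) :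
    annulusBarrier κ z R x ≤ 1 :=
  div_le_one_of_le₀ (sub_le_sub_right (gaussian_le_exp hκ.le hR (by norm_num) (by linarith)) _)
    (annulusBarrier_denom_pos hκ).le

lemma harnackRatio_le_annulusBarrier (hκ : 0 < κ) (hR : 0 < R) (hx : ‖x - z‖ ≤ 3 * R / 4) :
    harnackRatio κ ≤ annulusBarrier κ z R x :=
  div_le_div_of_nonneg_right (sub_le_sub_right (exp_le_gaussian hκ.le hR (by linarith)) _)
    (annulusBarrier_denom_pos hκ).le

end Barrier

-- For `k = barrierRate / R²` this makes `2 k λ |x - z|² ≥ nΛ + μ + 1` wherever `|x - z| ≥ R/2`.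
def barrierRate (n : ℕ) (lam Lam mu : ℝ) : ℝ := 2 * (n * Lam + mu + 1) / lam

variable {lam Lam mu K θ : ℝ} {F : OpType n}

lemma StructF.apply_zero (hF : StructF n lam Lam mu K θ F) {x : En n} (hx : x ≠ 0) :
    F 0 0 x = 0 := by
  simpa using hF.homog 0 le_rfl 0 0 x hx

lemma StructF.barrierRate_numerator_pos (hF : StructF n lam Lam mu K θ F) :
    0 < n * Lam + mu + 1 := by
  have : 0 ≤ (n : ℝ) * Lam := mul_nonneg n.cast_nonneg (hF.lam_pos.le.trans hF.lam_le)
  linarith [hF.mu_nonneg]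

lemma StructF.barrierRate_pos (hF : StructF n lam Lam mu K θ F) : 0 < barrierRate n lam Lam mu :=
  div_pos (by linarith [hF.barrierRate_numerator_pos]) hF.lam_pos

lemma StructF.gaussian_lt_zero (hF : StructF n lam Lam mu K θ F) {z x : En n} {R : ℝ}
    (hR : 0 < R) (hxz : R / 2 ≤ ‖x - z‖) (hx : ‖x - z‖ ≤ ‖x‖) :
    F (hess n (gaussian z (barrierRate n lam Lam mu / R ^ 2)) x)
      (grad n (gaussian z (barrierRate n lam Lam mu / R ^ 2)) x) x < 0 := by
  set k := barrierRate n lam Lam mu / R ^ 2 with hk_def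
  have hA := hF.barrierRate_numerator_pos
  have hk : 0 < k := div_pos hF.barrierRate_pos (by positivity)
  have hg := gaussian_pos z k x
  have hs : 0 < ‖x - z‖ := by linarith
  have hx0 : x ≠ 0 := norm_pos_iff.1 (hs.trans_le hx)
  have hP : PucciPlus n lam Lam (hess n (gaussian z k) x)
      ≤ 2 * k * gaussian z k x * (n * Lam - 2 * k * lam * ‖x - z‖ ^ 2) := by
    rw [hess_gaussian]
    refine (pucciPlus_smul_vecMulVec_sub_smul_one_le hF.lam_le (by positivity) (by positivity)
      _).trans_eq ?_
    rw [dotProduct_self_eq_norm_sq]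
    ring
  have hgrad : ‖x‖⁻¹ * ‖grad n (gaussian z k) x‖ ≤ 2 * k * gaussian z k x := by
    rw [grad_gaussian, norm_smul, Real.norm_eq_abs, abs_of_nonpos (by nlinarith),
      inv_mul_le_iff₀ (hs.trans_le hx)]
    nlinarith [mul_le_mul_of_nonneg_left hx (by positivity : (0 : ℝ) ≤ 2 * k * gaussian z k x)]
  have hrate : n * Lam + mu + 1 ≤ 2 * k * lam * ‖x - z‖ ^ 2 := by
    have hR2 : R ^ 2 ≤ 4 * ‖x - z‖ ^ 2 := by nlinarith
    have : 2 * k * lam * ‖x - z‖ ^ 2 = (n * Lam + mu + 1) * (4 * ‖x - z‖ ^ 2 / R ^ 2) := by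
      rw [hk_def, barrierRate]
      field_simp [hF.lam_pos.ne']
      ring
    rw [this]
    exact le_mul_of_one_le_right hA.le ((one_le_div (by positivity)).2 hR2)
  have hup := hF.ellip_upper (hess n (gaussian z k) x) 0 (grad n (gaussian z k) x) 0 x hx0
  rw [hF.apply_zero hx0, sub_zero, sub_zero, sub_zero, mul_assoc] at hup
  have h2kg : 0 < 2 * k * gaussian z k x := by positivity
  nlinarith [mul_le_mul_of_nonneg_left hgrad hF.mu_nonneg, mul_le_mul_of_nonneg_left hrate h2kg.le]

lemma StructF.not_isLocalMinOn_sub_smul_gaussian (hF : StructF n lam Lam mu K θ F)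
    {U : Set (En n)} {u : En n → ℝ} (hsup : ViscSupersol n (fun M p _ x => F M p x) U u)
    {z x₀ : En n} {R c : ℝ} (hR : 0 < R) (hc : 0 < c) (hx₀U : x₀ ∈ U)
    (hx₀ : R / 2 ≤ ‖x₀ - z‖) (hgeo : ‖x₀ - z‖ ≤ ‖x₀‖) :
    ¬ IsLocalMinOn (fun x => u x - (c • gaussian z (barrierRate n lam Lam mu / R ^ 2)) x) U x₀ := by
  intro hmin
  have hx₀0 : x₀ ≠ 0 := norm_pos_iff.1 (by linarith)
  have hvisc : 0 ≤ F (hess n (c • gaussian z (barrierRate n lam Lam mu / R ^ 2)) x₀)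
      (grad n (c • gaussian z (barrierRate n lam Lam mu / R ^ 2)) x₀) x₀ :=
    hsup _ ((contDiff_gaussian z _).const_smul c) x₀ hx₀U hmin
  rw [hess_smul, grad_smul, hF.homog c hc.le _ _ _ hx₀0] at hvisc
  nlinarith [hF.gaussian_lt_zero hR hx₀ hgeo]

/-- A negative minimum of `u - m · annulusBarrier` on the closed annulus can lie neither on the
inner sphere, where `u ≥ m`, nor on the outer one, where the barrier vanishes; at an interior
minimum it contradicts `StructF.not_isLocalMinOn_sub_smul_gaussian`. -/
lemma StructF.mul_annulusBarrier_le (hF : StructF n lam Lam mu K θ F) {U : Set (En n)}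
    {u : En n → ℝ} (hsup : ViscSupersol n (fun M p _ x => F M p x) U u) {z : En n} {R m : ℝ}
    (hR : 0 < R) (hU : closedBall z R ⊆ U) (hcont : ContinuousOn u (closedBall z R))
    (hpos : ∀ x ∈ closedBall z R, 0 < u x) (hgeo : ∀ x ∈ closedBall z R, ‖x - z‖ ≤ ‖x‖)
    (hm : ∀ x ∈ closedBall z (R / 2), m ≤ u x) (hm0 : 0 ≤ m) {x : En n}
    (hxR : x ∈ closedBall z R) (hx : R / 2 ≤ ‖x - z‖) :
    m * annulusBarrier (barrierRate n lam Lam mu) z R x ≤ u x := by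
  set κ := barrierRate n lam Lam mu
  set g := gaussian z (κ / R ^ 2)
  set c := m / (Real.exp (-κ * (1 / 2) ^ 2) - Real.exp (-κ))
  have hκ : 0 < κ := hF.barrierRate_pos
  have hc : 0 ≤ c := div_nonneg hm0 (annulusBarrier_denom_pos hκ).le
  have hcg : ∀ y, m * annulusBarrier κ z R y = c * g y - c * Real.exp (-κ) := fun y => by
    rw [annulusBarrier]; ring
  have hdist : Continuous fun y : En n => ‖y - z‖ := by fun_prop
  set A := closedBall z R ∩ {x | R / 2 ≤ ‖x - z‖}
  have hA : IsCompact A := (isCompact_closedBall z R).inter_right (isClosed_le continuous_const hdist)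
  by_contra! hlt
  obtain ⟨x₀, ⟨hx₀R, hx₀⟩, hx₀min⟩ := hA.exists_isMinOn ⟨x, hxR, hx⟩
    ((hcont.mono inter_subset_left).sub
      ((contDiff_gaussian z _).continuous.continuousOn.const_smul c))
  have hx₀lt : u x₀ < m * annulusBarrier κ z R x₀ := by
    have : u x₀ - c * g x₀ ≤ u x - c * g x := hx₀min ⟨hxR, hx⟩
    linarith [hcg x, hcg x₀]
  replace hx₀ : R / 2 ≤ ‖x₀ - z‖ := hx₀
  have hx₀_lt_R : ‖x₀ - z‖ < R := by
    by_contra! hge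
    nlinarith [annulusBarrier_nonpos hκ hR hge, hpos x₀ hx₀R]
  have hx₀_gt_half : R / 2 < ‖x₀ - z‖ := by
    refine hx₀.lt_of_ne fun heq => ?_
    nlinarith [annulusBarrier_le_one hκ hR hx₀, hm x₀ (mem_closedBall_iff_norm.2 heq.ge)]
  have hmin : IsLocalMinOn (fun x => u x - (c • g) x) U x₀ := by
    have hO : ball z R ∩ {x | R / 2 < ‖x - z‖} ∈ 𝓝 x₀ :=
      (isOpen_ball.inter (isOpen_lt continuous_const hdist)).mem_nhds
        ⟨mem_ball_iff_norm.2 hx₀_lt_R, hx₀_gt_half⟩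
    filter_upwards [nhdsWithin_le_nhds hO] with y hy
    exact hx₀min ⟨mem_closedBall_iff_norm.2 (mem_ball_iff_norm.1 hy.1).le,
      Set.mem_ofPred.2 (Set.mem_ofPred.1 hy.2).le⟩
  have hc_pos : 0 < c := hc.lt_of_ne fun h => by
    have := hcg x₀
    rw [← h] at this
    linarith [hpos x₀ hx₀R]
  exact hF.not_isLocalMinOn_sub_smul_gaussian hsup hR hc_pos (hU hx₀R) hx₀_gt_half.le
    (hgeo x₀ hx₀R) hmin

lemma StructF.harnack_step (hF : StructF n lam Lam mu K θ F) {U : Set (En n)}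
    {u : En n → ℝ} (hsup : ViscSupersol n (fun M p _ x => F M p x) U u) {z : En n} {R m : ℝ}
    (hR : 0 < R) (hU : closedBall z R ⊆ U) (hcont : ContinuousOn u (closedBall z R))
    (hpos : ∀ x ∈ closedBall z R, 0 < u x) (hgeo : ∀ x ∈ closedBall z R, ‖x - z‖ ≤ ‖x‖)
    (hm : ∀ x ∈ closedBall z (R / 2), m ≤ u x) (hm0 : 0 ≤ m) :
    ∀ y ∈ closedBall z (3 * R / 4), harnackRatio (barrierRate n lam Lam mu) * m ≤ u y := by
  intro y hy
  have hκ := hF.barrierRate_pos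
  rw [mem_closedBall_iff_norm] at hy
  rcases le_or_gt ‖y - z‖ (R / 2) with hy2 | hy2
  · calc harnackRatio _ * m ≤ 1 * m := mul_le_mul_of_nonneg_right (harnackRatio_le_one hκ) hm0
      _ ≤ u y := by rw [one_mul]; exact hm y (mem_closedBall_iff_norm.2 hy2)
  · calc harnackRatio _ * m ≤ m * annulusBarrier _ z R y := by
          rw [mul_comm]
          exact mul_le_mul_of_nonneg_left (harnackRatio_le_annulusBarrier hκ hR hy) hm0
      _ ≤ u y := hF.mul_annulusBarrier_le hsup hR hU hcont hpos hgeo hm hm0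
          (mem_closedBall_iff_norm.2 (by linarith)) hy2.le

lemma harnack_chain {X : Type*} [PseudoMetricSpace X] {u : X → ℝ} {θ r s m : ℝ} (hθ : 0 ≤ θ)
    {z : ℕ → X} {N : ℕ}
    (hstep : ∀ j < N, ∀ m', 0 ≤ m' → (∀ x ∈ closedBall (z j) r, m' ≤ u x) →
      ∀ y ∈ closedBall (z j) s, θ * m' ≤ u y)
    (hnext : ∀ j < N, r + dist (z (j + 1)) (z j) ≤ s)
    (hm0 : 0 ≤ m) (hm : ∀ x ∈ closedBall (z 0) r, m ≤ u x) :
    ∀ x ∈ closedBall (z N) r, θ ^ N * m ≤ u x := by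
  induction N with
  | zero => simpa using hm
  | succ N ih =>
    intro x hx
    have hN := ih (fun j hj => hstep j (by omega)) (fun j hj => hnext j (by omega))
    rw [pow_succ', mul_assoc]
    exact hstep N N.lt_succ_self _ (by positivity) hN x
      (closedBall_subset_closedBall' (hnext N N.lt_succ_self) hx)

variable {ω : Set (En n)} {ξ : En n} {σ σ₀ : ℝ}

lemma mem_cone_of_mul_norm_lt_inner (hω : ∀ x : En n, ‖x‖ = 1 → σ < inner ℝ x ξ → x ∈ ω)
    {x : En n} (hx : σ * ‖x‖ < inner ℝ x ξ) : x ∈ cone n ω := by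
  have hx0 : x ≠ 0 := by rintro rfl; simp at hx
  have hnorm : 0 < ‖x‖ := norm_pos_iff.2 hx0
  refine ⟨hx0, hω _ (norm_smul_inv_norm hx0) ?_⟩
  rw [real_inner_smul_left, inv_mul_eq_div, lt_div_iff₀ hnorm]
  linarith

lemma mem_cone_of_norm_sub_smul_le (hσ₀ : σ₀ ∈ Ioc (0 : ℝ) 1) (hσ : σ ≤ 1 - σ₀) (hξ : ‖ξ‖ = 1)
    (hω : ∀ x : En n, ‖x‖ = 1 → σ < inner ℝ x ξ → x ∈ ω) {t : ℝ} (ht : 1 ≤ t) {x : En n}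
    (hx : ‖x - t • ξ‖ ≤ σ₀ / 16) : x ∈ cone n ω := by
  obtain ⟨hσ₀0, hσ₀1⟩ := hσ₀
  have htξ : ‖t • ξ‖ = t := by rw [norm_smul, hξ, mul_one, Real.norm_of_nonneg (by linarith)]
  have hupper : ‖x‖ ≤ t + σ₀ / 16 := by linarith [norm_le_norm_add_norm_sub' x (t • ξ)]
  have hinner : t - σ₀ / 16 ≤ inner ℝ x ξ := by
    have h : inner ℝ x ξ = t + inner ℝ (x - t • ξ) ξ := by
      rw [inner_sub_left, real_inner_smul_left, real_inner_self_eq_norm_sq, hξ]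
      ring
    have := (abs_real_inner_le_norm (x - t • ξ) ξ).trans_eq (by rw [hξ, mul_one])
    linarith [neg_abs_le (inner ℝ (x - t • ξ) ξ)]
  refine mem_cone_of_mul_norm_lt_inner hω ?_
  nlinarith [mul_le_mul_of_nonneg_right hσ (norm_nonneg x)]

lemma closedBall_subset_cone (hσ₀ : σ₀ ∈ Ioc (0 : ℝ) 1) (hσ : σ ≤ 1 - σ₀) (hξ : ‖ξ‖ = 1)
    (hω : ∀ x : En n, ‖x‖ = 1 → σ < inner ℝ x ξ → x ∈ ω) {t : ℝ} (ht : 1 ≤ t) {c : En n}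
    (hc : ‖c - t • ξ‖ ≤ σ₀ / 32) :
    closedBall c (σ₀ / 32) ⊆ cone n ω ∧ ∀ x ∈ closedBall c (σ₀ / 32), ‖x - c‖ ≤ ‖x‖ := by
  have key : ∀ x ∈ closedBall c (σ₀ / 32), x ∈ cone n ω ∧ ‖x - c‖ ≤ ‖x‖ := by
    intro x hx
    rw [mem_closedBall_iff_norm] at hx
    have hxt : ‖x - t • ξ‖ ≤ σ₀ / 16 := by
      linarith [norm_sub_le_norm_sub_add_norm_sub x c (t • ξ)]
    have htξ : ‖t • ξ‖ = t := by rw [norm_smul, hξ, mul_one, Real.norm_of_nonneg (by linarith)]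
    refine ⟨mem_cone_of_norm_sub_smul_le hσ₀ hσ hξ hω ht hxt, ?_⟩
    linarith [norm_sub_norm_le (t • ξ) x, norm_sub_rev x (t • ξ), hσ₀.2]
  exact ⟨fun x hx => (key x hx).1, fun x hx => (key x hx).2⟩

def axisChain (ξ x₀ : En n) (N j : ℕ) : En n := AffineMap.lineMap ξ ((2 : ℝ) • x₀) ((j : ℝ) / N)

section AxisChain

variable {x₀ : En n} {N : ℕ}

@[simp] lemma axisChain_zero : axisChain ξ x₀ N 0 = ξ := by simp [axisChain]

lemma axisChain_self (hN : N ≠ 0) : axisChain ξ x₀ N N = (2 : ℝ) • x₀ := by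
  simp [axisChain, hN]

lemma norm_axisChain_sub_smul_le {j : ℕ} (hj : j ≤ N) :
    ‖axisChain ξ x₀ N j - (1 + (j : ℝ) / N) • ξ‖ ≤ 2 * ‖x₀ - ξ‖ := by
  have hjN : (j : ℝ) / N ≤ 1 := div_le_one_of_le₀ (by exact_mod_cast hj) N.cast_nonneg
  have : axisChain ξ x₀ N j - (1 + (j : ℝ) / N) • ξ = ((j : ℝ) / N) • (2 : ℝ) • (x₀ - ξ) := by
    rw [axisChain, AffineMap.lineMap_apply_module']
    module
  rw [this, norm_smul, norm_smul, Real.norm_of_nonneg (by positivity), Real.norm_two]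
  exact mul_le_of_le_one_left (by positivity) hjN

lemma dist_axisChain_succ_le (j : ℕ) :
    dist (axisChain ξ x₀ N (j + 1)) (axisChain ξ x₀ N j) ≤ dist ξ ((2 : ℝ) • x₀) / N := by
  rw [axisChain, axisChain, dist_lineMap_lineMap, Real.dist_eq]
  rcases N.eq_zero_or_pos with rfl | hN
  · simp
  · rw [← sub_div, Nat.cast_succ, add_sub_cancel_left, abs_of_pos (by positivity),
      one_div_mul_eq_div]

end AxisChain

lemma closedBall_axis_subset_cone (hσ₀ : σ₀ ∈ Ioc (0 : ℝ) 1) (hσ : σ ≤ 1 - σ₀) (hξ : ‖ξ‖ = 1)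
    (hω : ∀ x : En n, ‖x‖ = 1 → σ < inner ℝ x ξ → x ∈ ω) :
    closedBall ξ (σ₀ / 64) ⊆ cone n ω :=
  (closedBall_subset_closedBall (by linarith [hσ₀.1])).trans
    (closedBall_subset_cone hσ₀ hσ hξ hω le_rfl
      (by rw [one_smul, sub_self, norm_zero]; linarith [hσ₀.1])).1

/-- Harnack chain of `⌈256/σ₀⌉` balls of radius `σ₀/32` from `ξ` to `2 x₀`, all centred within
`σ₀/32` of the axis `ℝ₊ ξ`, hence inside the cone. -/
lemma StructF.pow_mul_le_apply_two_smul (hF : StructF n lam Lam mu K θ F)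
    (hσ₀ : σ₀ ∈ Ioc (0 : ℝ) 1) (hσ : σ ≤ 1 - σ₀) (hξ : ‖ξ‖ = 1)
    (hω : ∀ x : En n, ‖x‖ = 1 → σ < inner ℝ x ξ → x ∈ ω) {u : En n → ℝ}
    (hcont : ContinuousOn u (cone n ω)) (hpos : ∀ x ∈ cone n ω, 0 < u x)
    (hsup : ViscSupersol n (fun M p _ x => F M p x) (cone n ω) u) {x₀ : En n}
    (hx₀ : x₀ ∈ closedBall ξ (σ₀ / 64)) (hmin : ∀ x ∈ closedBall ξ (σ₀ / 64), u x₀ ≤ u x) :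
    harnackRatio (barrierRate n lam Lam mu) ^ ⌈256 / σ₀⌉₊ * u x₀ ≤ u ((2 : ℝ) • x₀) := by
  have hσ₀0 := hσ₀.1
  set N := ⌈256 / σ₀⌉₊
  have hN : 256 ≤ σ₀ * N := by
    have := Nat.le_ceil (256 / σ₀)
    rwa [div_le_iff₀ hσ₀0, mul_comm] at this
  have hNpos : (0 : ℝ) < N := pos_of_mul_pos_right (by linarith) hσ₀0.le
  have hx₀ξ : ‖x₀ - ξ‖ ≤ σ₀ / 64 := mem_closedBall_iff_norm.1 hx₀
  have hlength : dist ξ ((2 : ℝ) • x₀) ≤ 2 := by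
    rw [dist_eq_norm, show ξ - (2 : ℝ) • x₀ = -((2 : ℝ) • (x₀ - ξ) + ξ) by module, norm_neg]
    calc ‖(2 : ℝ) • (x₀ - ξ) + ξ‖ ≤ 2 * ‖x₀ - ξ‖ + ‖ξ‖ := by
          simpa [norm_smul] using norm_add_le ((2 : ℝ) • (x₀ - ξ)) ξ
      _ ≤ 2 := by linarith [hσ₀.2]
  have hstep : 2 / (N : ℝ) ≤ σ₀ / 128 := by
    rw [div_le_iff₀ hNpos]
    linarith
  have hchain := harnack_chain (u := u) (z := axisChain ξ x₀ N) (r := σ₀ / 32 / 2)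
    (s := 3 * (σ₀ / 32) / 4) (harnackRatio_pos hF.barrierRate_pos).le
    (fun j hj m hm0 hm => by
      obtain ⟨hsub, hgeo⟩ := closedBall_subset_cone hσ₀ hσ hξ hω
        (le_add_of_nonneg_right (by positivity))
        ((norm_axisChain_sub_smul_le (x₀ := x₀) hj.le).trans (by linarith))
      exact hF.harnack_step hsup (by positivity) hsub (hcont.mono hsub)
        (fun x hx => hpos x (hsub hx)) hgeo hm hm0)
    (fun j _ => by
      have := (dist_axisChain_succ_le (ξ := ξ) (x₀ := x₀) (N := N) j).trans
        (div_le_div_of_nonneg_right hlength hNpos.le)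
      linarith [hstep])
    (hpos x₀ (closedBall_axis_subset_cone hσ₀ hσ hξ hω hx₀)).le
    (by simpa [show σ₀ / 32 / 2 = σ₀ / 64 by ring] using hmin)
  rw [axisChain_self (Nat.cast_pos.1 hNpos).ne'] at hchain
  exact hchain _ (mem_closedBall_self (by positivity))

lemma StructF.le_of_mem_alphaPlusSet (hF : StructF n lam Lam mu K θ F)
    (hσ₀ : σ₀ ∈ Ioc (0 : ℝ) 1) (hσ : σ ≤ 1 - σ₀) (hξ : ‖ξ‖ = 1)
    (hω : ∀ x : En n, ‖x‖ = 1 → σ < inner ℝ x ξ → x ∈ ω) {α : ℝ}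
    (hα : α ∈ alphaPlusSet n F ω) :
    α ≤ ⌈256 / σ₀⌉₊ * -Real.log (harnackRatio (barrierRate n lam Lam mu)) / Real.log 2 := by
  obtain ⟨-, u, ⟨hcont, hhom⟩, hpos, hsup⟩ := hα
  have hball := closedBall_axis_subset_cone hσ₀ hσ hξ hω
  obtain ⟨x₀, hx₀, hmin⟩ := (isCompact_closedBall ξ (σ₀ / 64)).exists_isMinOn
    ⟨ξ, mem_closedBall_self (by linarith [hσ₀.1])⟩ (hcont.mono hball)
  have hu₀ : 0 < u x₀ := hpos x₀ (hball hx₀)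
  have hθpos := harnackRatio_pos hF.barrierRate_pos
  have hpow : harnackRatio (barrierRate n lam Lam mu) ^ ⌈256 / σ₀⌉₊ ≤ ((2 : ℝ) ^ α)⁻¹ := by
    refine le_of_mul_le_mul_right ?_ hu₀
    calc _ ≤ u ((2 : ℝ) • x₀) := hF.pow_mul_le_apply_two_smul hσ₀ hσ hξ hω hcont hpos hsup hx₀ hmin
      _ = ((2 : ℝ) ^ α)⁻¹ * u x₀ := by
        rw [hhom x₀ (hball hx₀) 2 two_pos, inv_mul_cancel_left₀ (by positivity)]
  have hlog := Real.log_le_log (by positivity) hpow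
  rw [Real.log_pow, Real.log_inv, Real.log_rpow two_pos] at hlog
  rw [le_div_iff₀ (Real.log_pos one_lt_two)]
  linarith

end

theorem stmt_13_general (n : ℕ) (lam Lam mu σ₀ : ℝ) (hσ₀ : σ₀ ∈ Ioc (0 : ℝ) 1) :
    ∃ C : ℝ, 0 < C ∧ ∀ ξ : En n, ‖ξ‖ = 1 → ∀ σ : ℝ, σ ≤ 1 - σ₀ →
      ∀ ω : Set (En n), GoodCone n ω →
      (∀ x : En n, ‖x‖ = 1 → σ < (inner ℝ x ξ : ℝ) → x ∈ ω) →
      ∀ (K θ : ℝ) (F : OpType n), StructF n lam Lam mu K θ F →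
      alphaPlus n F ω ≤ C := by
  set B := ⌈256 / σ₀⌉₊ * -Real.log (harnackRatio (barrierRate n lam Lam mu)) / Real.log 2
  refine ⟨max 1 B, one_pos.trans_le (le_max_left _ _), ?_⟩
  intro ξ hξ σ hσ ω _ hω K θ F hF
  exact Real.sSup_le (fun α hα => (hF.le_of_mem_alphaPlusSet hσ₀ hσ hξ hω hα).trans
    (le_max_right _ _)) (zero_le_one.trans (le_max_left _ _))

/-- **Lemma 3.2 (upper bound for `α⁺`).**
If `ω ⊇ {x ∈ S^{n-1} : x·ξ > σ}` with `σ ≤ 1 - σ₀`, then `α⁺(F, ω) ≤ C` where `C`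
depends only on `n, λ, Λ, μ` and `σ₀`. -/
theorem stmt_13 (n : ℕ) (hn : 2 ≤ n) (lam Lam mu σ₀ : ℝ)
    (hlam : 0 < lam) (hlamLam : lam ≤ Lam) (hmu : 0 ≤ mu) (hσ₀ : σ₀ ∈ Ioc (0 : ℝ) 1) :
    ∃ C : ℝ, 0 < C ∧ ∀ ξ : En n, ‖ξ‖ = 1 → ∀ σ : ℝ, σ ≤ 1 - σ₀ →
      ∀ ω : Set (En n), GoodCone n ω →
      (∀ x : En n, ‖x‖ = 1 → σ < (inner ℝ x ξ : ℝ) → x ∈ ω) →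
      ∀ (K θ : ℝ) (F : OpType n), StructF n lam Lam mu K θ F →
      alphaPlus n F ω ≤ C :=
  stmt_13_general n lam Lam mu σ₀ hσ₀
end
end

section
/- (Interpolation inequality.) Let n ≥ 1, γ ∈ (0,1], h₀ > 0, and let Ω ⊆ ℝⁿ be a nonempty bounded open set with the property that for every x ∈ Ω and every unit vector ν ∈ S^{n−1} there is a sign s ∈ {−1,+1} such that x + h·s·ν ∈ Ω for all h ∈ (0,h₀). Then there exists a constant C > 0, depending only on n, γ and h₀, such that for every continuously differentiable function u : Ω → ℝ with finite K₁ := sup_Ω |u| + sup_Ω |Du| + sup{ |Du(x)−Du(y)|/|x−y|^γ : x,y ∈ Ω, x ≠ y } and K₂ := sup_Ω |u|, one has sup_Ω |u| + sup_Ω |Du| ≤ C · K₁^{1/(1+γ)} · K₂^{γ/(1+γ)}. -/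
/-!
Moving from `y` a distance `h < h₀` along a direction `±ν` that stays in `Ω`, the mean value
inequality and the Hölder bound on `Du` give `h |Du(y) ν| ≤ 2 K₂ + K₁ h^{1+γ}`. When `K₂ < K₁`,
the choice `h = (h₀/2) (K₂/K₁)^{1/(1+γ)}` balances the two terms, each becoming a multiple of
`K₁^{1/(1+γ)} K₂^{γ/(1+γ)}`; when `K₂ ≥ K₁` the bound `|Du| ≤ K₁` already suffices. The zeroth
order term is at most `min K₁ K₂`, which is below any weighted geometric mean of `K₁` and `K₂`.
-/

open Set Filter Topology

noncomputable section

section Calculus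

variable {E : Type*} [NormedAddCommGroup E] [NormedSpace ℝ E] {Ω : Set E} {u : E → ℝ}
  {u' : E → E →L[ℝ] ℝ} {y v : E} {K K₂ γ : ℝ}

lemma abs_sub_sub_le_mul_rpow_of_segment_subset
    (hd : ∀ x ∈ Ω, HasFDerivWithinAt u (u' x) Ω x)
    (hHol : ∀ x ∈ Ω, ‖u' x - u' y‖ ≤ K * ‖x - y‖ ^ γ) (hK : 0 ≤ K) (hγ : 0 ≤ γ)
    (hseg : segment ℝ y (y + v) ⊆ Ω) :
    |u (y + v) - u y - u' y v| ≤ K * ‖v‖ ^ (1 + γ) := by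
  have hbound : ∀ x ∈ segment ℝ y (y + v), ‖u' x - u' y‖ ≤ K * ‖v‖ ^ γ := fun x hx => by
    refine (hHol x (hseg hx)).trans ?_
    have := norm_sub_le_of_mem_segment hx
    rw [add_sub_cancel_left] at this
    gcongr
  have := (convex_segment y (y + v)).norm_image_sub_le_of_norm_hasFDerivWithin_le'
    (fun x hx => (hd x (hseg hx)).mono hseg) hbound (left_mem_segment ℝ _ _)
    (right_mem_segment ℝ _ _)
  rwa [add_sub_cancel_left, Real.norm_eq_abs, mul_assoc, ← Real.rpow_add_one' (norm_nonneg v)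
    (by positivity), add_comm γ] at this

lemma abs_apply_le_two_mul_add_mul_rpow (hd : ∀ x ∈ Ω, HasFDerivWithinAt u (u' x) Ω x)
    (hub : ∀ x ∈ Ω, |u x| ≤ K₂) (hHol : ∀ x ∈ Ω, ‖u' x - u' y‖ ≤ K * ‖x - y‖ ^ γ)
    (hK : 0 ≤ K) (hγ : 0 ≤ γ) (hseg : segment ℝ y (y + v) ⊆ Ω) :
    |u' y v| ≤ 2 * K₂ + K * ‖v‖ ^ (1 + γ) := by
  have huy := hub y (hseg (left_mem_segment ℝ _ _))
  have huyv := hub (y + v) (hseg (right_mem_segment ℝ _ _))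
  have hrem := abs_sub_sub_le_mul_rpow_of_segment_subset hd hHol hK hγ hseg
  calc |u' y v| = |(u (y + v) - u y) - (u (y + v) - u y - u' y v)| := by ring_nf
    _ ≤ |u (y + v)| + |u y| + K * ‖v‖ ^ (1 + γ) :=
        (abs_sub _ _).trans (add_le_add (abs_sub _ _) hrem)
    _ ≤ 2 * K₂ + K * ‖v‖ ^ (1 + γ) := by linarith

lemma segment_subset_of_forall_add_smul_mem {w : E} {h₀ h : ℝ} (hy : y ∈ Ω)
    (hray : ∀ t ∈ Ioo 0 h₀, y + t • w ∈ Ω) (hh : h ∈ Ioo 0 h₀) :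
    segment ℝ y (y + h • w) ⊆ Ω := by
  rw [segment_eq_image']
  rintro _ ⟨θ, ⟨hθ₀, hθ₁⟩, rfl⟩
  simp only [add_sub_cancel_left, smul_smul]
  rcases hθ₀.eq_or_lt with rfl | hθ
  · simpa using hy
  exact hray _ ⟨by nlinarith [hh.1], by nlinarith [hh.1, hh.2]⟩

lemma norm_mul_le_two_mul_add_mul_rpow {h₀ h : ℝ}
    (hd : ∀ x ∈ Ω, HasFDerivWithinAt u (u' x) Ω x) (hy : y ∈ Ω)
    (hub : ∀ x ∈ Ω, |u x| ≤ K₂) (hHol : ∀ x ∈ Ω, ‖u' x - u' y‖ ≤ K * ‖x - y‖ ^ γ)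
    (hK : 0 ≤ K) (hγ : 0 ≤ γ)
    (hdir : ∀ ν : E, ‖ν‖ = 1 → ∃ s : ℝ, (s = 1 ∨ s = -1) ∧
      ∀ h : ℝ, h ∈ Ioo (0 : ℝ) h₀ → y + (h * s) • ν ∈ Ω) (hh : h ∈ Ioo 0 h₀) :
    ‖u' y‖ * h ≤ 2 * K₂ + K * h ^ (1 + γ) := by
  have hK₂ : 0 ≤ K₂ := (abs_nonneg _).trans (hub y hy)
  have hpos : 0 < h := hh.1
  rw [← le_div_iff₀ hpos]
  refine ContinuousLinearMap.opNorm_le_of_unit_norm (by positivity) fun ν hν => ?_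
  obtain ⟨s, hs, hray⟩ := hdir ν hν
  have hs1 : |s| = 1 := by rcases hs with rfl | rfl <;> norm_num
  have hseg : segment ℝ y (y + h • s • ν) ⊆ Ω :=
    segment_subset_of_forall_add_smul_mem hy (fun t ht => by rw [smul_smul]; exact hray t ht) hh
  have := abs_apply_le_two_mul_add_mul_rpow hd hub hHol hK hγ hseg
  simp only [map_smul, norm_smul, hν, smul_eq_mul, abs_mul, Real.norm_eq_abs, hs1,
    abs_of_pos hpos, mul_one, one_mul] at this
  rwa [le_div_iff₀ hpos, Real.norm_eq_abs, mul_comm]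

end Calculus

lemma min_le_rpow_mul_rpow {x y a b : ℝ} (hx : 0 ≤ x) (hy : 0 ≤ y) (ha : 0 ≤ a) (hb : 0 ≤ b)
    (hab : a + b = 1) : min x y ≤ x ^ a * y ^ b := by
  have hm : 0 ≤ min x y := le_min hx hy
  calc min x y = min x y ^ a * min x y ^ b := by
        rw [← Real.rpow_add' hm (by rw [hab]; exact one_ne_zero), hab, Real.rpow_one]
    _ ≤ x ^ a * y ^ b := by gcongr; exacts [min_le_left x y, min_le_right x y]

lemma nonpos_of_forall_le_mul_rpow {A K γ h₀ : ℝ} (hγ : 0 < γ) (hh₀ : 0 < h₀)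
    (hA : ∀ h ∈ Ioo 0 h₀, A ≤ K * h ^ γ) : A ≤ 0 := by
  have hlim : Tendsto (fun h : ℝ => K * h ^ γ) (𝓝 0) (𝓝 0) := by
    simpa [Real.zero_rpow hγ.ne'] using
      ((Real.continuousAt_rpow_const 0 γ (Or.inr hγ.le)).const_mul K).tendsto
  exact ge_of_tendsto (hlim.mono_left nhdsWithin_le_nhds)
    (by filter_upwards [Ioo_mem_nhdsGT hh₀] with h hh using hA h hh)

lemma interpolation_rpow_identities {K₁ K₂ γ : ℝ} (hγ : 0 < γ) (hK₁ : 0 < K₁) (hK₂ : 0 ≤ K₂) :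
    K₁ * ((K₂ / K₁) ^ (1 / (1 + γ))) ^ γ = K₁ ^ (1 / (1 + γ)) * K₂ ^ (γ / (1 + γ)) ∧
    (K₂ / K₁) ^ (1 / (1 + γ)) * (K₁ ^ (1 / (1 + γ)) * K₂ ^ (γ / (1 + γ))) = K₂ := by
  have hsum : 1 / (1 + γ) + γ / (1 + γ) = 1 := by field_simp
  have hsplit : ∀ K : ℝ, 0 ≤ K → K ^ (1 / (1 + γ)) * K ^ (γ / (1 + γ)) = K := fun K hK => by
    rw [← Real.rpow_add' hK (by rw [hsum]; exact one_ne_zero), hsum, Real.rpow_one]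
  rw [← Real.rpow_mul (div_nonneg hK₂ hK₁.le), one_div_mul_eq_div, Real.div_rpow hK₂ hK₁.le,
    Real.div_rpow hK₂ hK₁.le]
  constructor
  · nth_rewrite 1 [← hsplit K₁ hK₁.le]
    field_simp
  · rw [div_mul_eq_mul_div, mul_left_comm, mul_div_cancel_left₀ _ (by positivity)]
    exact hsplit K₂ hK₂

lemma le_of_forall_mul_le_add_mul_rpow {A K₁ K₂ γ h₀ : ℝ} (hγ : 0 < γ) (hh₀ : 0 < h₀)
    (hK₂ : 0 ≤ K₂) (hK₂₁ : K₂ < K₁)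
    (hA : ∀ h ∈ Ioo 0 h₀, A * h ≤ 2 * K₂ + K₁ * h ^ (1 + γ)) :
    A ≤ (4 / h₀ + (h₀ / 2) ^ γ) * (K₁ ^ (1 / (1 + γ)) * K₂ ^ (γ / (1 + γ))) := by
  have hK₁ : 0 < K₁ := hK₂.trans_lt hK₂₁
  have hA' : ∀ h ∈ Ioo 0 h₀, A ≤ 2 * K₂ / h + K₁ * h ^ γ := fun h hh => by
    have := hA h hh
    rw [Real.rpow_add hh.1, Real.rpow_one] at this
    rw [div_add' _ _ _ hh.1.ne', le_div_iff₀ hh.1]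
    linarith
  rcases hK₂.eq_or_lt with rfl | hK₂pos
  · simp only [mul_zero, zero_div, zero_add] at hA'
    rw [Real.zero_rpow (by positivity), mul_zero, mul_zero]
    exact nonpos_of_forall_le_mul_rpow hγ hh₀ hA'
  obtain ⟨hrγ, hr⟩ := interpolation_rpow_identities hγ hK₁ hK₂
  set r := (K₂ / K₁) ^ (1 / (1 + γ))
  set M := K₁ ^ (1 / (1 + γ)) * K₂ ^ (γ / (1 + γ))
  have hrpos : 0 < r := by positivity
  have hr1 : r < 1 := Real.rpow_lt_one (by positivity) ((div_lt_one hK₁).2 hK₂₁) (by positivity)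
  calc A ≤ 2 * K₂ / (h₀ / 2 * r) + K₁ * (h₀ / 2 * r) ^ γ :=
        hA' _ ⟨by positivity, by nlinarith⟩
    _ = (4 / h₀ + (h₀ / 2) ^ γ) * M := by
        rw [Real.mul_rpow (by positivity) hrpos.le, mul_left_comm, hrγ, ← hr]
        field_simp
        ring

theorem stmt_18_general (n : ℕ) (γ h₀ : ℝ) (hγ : γ ∈ Ioc (0 : ℝ) 1) (hh₀ : 0 < h₀)
    (Ω : Set (En n))
    (hΩseg : ∀ x ∈ Ω, ∀ ν : En n, ‖ν‖ = 1 → ∃ s : ℝ, (s = 1 ∨ s = -1) ∧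
      ∀ h : ℝ, h ∈ Ioo (0 : ℝ) h₀ → x + (h * s) • ν ∈ Ω) :
    ∃ C : ℝ, 0 < C ∧ ∀ (u : En n → ℝ) (u' : En n → En n →L[ℝ] ℝ),
      (∀ x ∈ Ω, HasFDerivWithinAt u (u' x) Ω x) →
      ∀ K₁ K₂ : ℝ,
      (∀ x ∈ Ω, |u x| ≤ K₂) →
      (∀ x ∈ Ω, |u x| + ‖u' x‖ ≤ K₁) →
      (∀ x ∈ Ω, ∀ y ∈ Ω, ‖u' x - u' y‖ ≤ K₁ * ‖x - y‖ ^ γ) →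
      ∀ x ∈ Ω, ∀ y ∈ Ω,
        |u x| + ‖u' y‖ ≤ C * K₁ ^ (1 / (1 + γ)) * K₂ ^ (γ / (1 + γ)) := by
  obtain ⟨hγ₀, -⟩ := hγ
  set D := 4 / h₀ + (h₀ / 2) ^ γ
  refine ⟨2 + D, by positivity, fun u u' hd K₁ K₂ hub hK₁ hHol x hx y hy => ?_⟩
  set M := K₁ ^ (1 / (1 + γ)) * K₂ ^ (γ / (1 + γ))
  have hu_le : ∀ z ∈ Ω, |u z| ≤ K₁ := fun z hz =>
    (le_add_of_nonneg_right (norm_nonneg _)).trans (hK₁ z hz)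
  have hu'_le : ∀ z ∈ Ω, ‖u' z‖ ≤ K₁ := fun z hz =>
    (le_add_of_nonneg_left (abs_nonneg _)).trans (hK₁ z hz)
  have hK₁₀ : 0 ≤ K₁ := (norm_nonneg _).trans (hu'_le x hx)
  have hK₂₀ : 0 ≤ K₂ := (abs_nonneg _).trans (hub x hx)
  have hmin : min K₁ K₂ ≤ M :=
    min_le_rpow_mul_rpow hK₁₀ hK₂₀ (by positivity) (by positivity) (by field_simp)
  have hux : |u x| ≤ M := (le_min (hu_le x hx) (hub x hx)).trans hmin
  have hu'y : ‖u' y‖ ≤ (1 + D) * M := by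
    have hM : 0 ≤ M := by positivity
    have hD : 0 ≤ D := by positivity
    rcases le_or_gt K₁ K₂ with hle | hlt
    · calc ‖u' y‖ ≤ min K₁ K₂ := (hu'_le y hy).trans (min_eq_left hle).ge
        _ ≤ M := hmin
        _ ≤ (1 + D) * M := le_mul_of_one_le_left hM (by linarith)
    · calc ‖u' y‖ ≤ D * M := le_of_forall_mul_le_add_mul_rpow hγ₀ hh₀ hK₂₀ hlt fun h hh =>
            norm_mul_le_two_mul_add_mul_rpow hd hy hub (fun z hz => hHol z hz y hy) hK₁₀ hγ₀.le
              (hΩseg y hy) hh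
        _ ≤ (1 + D) * M := by gcongr; linarith
  rw [mul_assoc]
  linarith

/-- **Lemma 6.2 (interpolation inequality).**
If every point of the bounded open set `Ω` can be moved inside `Ω` along any direction
(up to a sign) for length `h₀`, then for every `C^{1,γ}` function `u` on `Ω`,
`sup |u| + sup |Du| ≤ C K₁^{1/(1+γ)} K₂^{γ/(1+γ)}`, where `K₁` bounds the full
`C^{1,γ}` data of `u` and `K₂` bounds `|u|`. -/
theorem stmt_18 (n : ℕ) (hn : 1 ≤ n) (γ h₀ : ℝ) (hγ : γ ∈ Ioc (0 : ℝ) 1) (hh₀ : 0 < h₀)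
    (Ω : Set (En n)) (hΩopen : IsOpen Ω) (hΩne : Ω.Nonempty)
    (hΩbdd : Bornology.IsBounded Ω)
    (hΩseg : ∀ x ∈ Ω, ∀ ν : En n, ‖ν‖ = 1 → ∃ s : ℝ, (s = 1 ∨ s = -1) ∧
      ∀ h : ℝ, h ∈ Ioo (0 : ℝ) h₀ → x + (h * s) • ν ∈ Ω) :
    ∃ C : ℝ, 0 < C ∧ ∀ (u : En n → ℝ) (u' : En n → En n →L[ℝ] ℝ),
      (∀ x ∈ Ω, HasFDerivWithinAt u (u' x) Ω x) →
      ∀ K₁ K₂ : ℝ,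
      (∀ x ∈ Ω, |u x| ≤ K₂) →
      (∀ x ∈ Ω, |u x| + ‖u' x‖ ≤ K₁) →
      (∀ x ∈ Ω, ∀ y ∈ Ω, ‖u' x - u' y‖ ≤ K₁ * ‖x - y‖ ^ γ) →
      ∀ x ∈ Ω, ∀ y ∈ Ω,
        |u x| + ‖u' y‖ ≤ C * K₁ ^ (1 / (1 + γ)) * K₂ ^ (γ / (1 + γ)) :=
  stmt_18_general n γ h₀ hγ hh₀ Ω hΩseg
end
end
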